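/- (Upper Bound 3) Let Λ(x) = ∑_{l=2}^{D} Λ_l x^l be a repetition distribution with no degree-1 term (Λ₁ = 0), with Λ₂ > 0, rate R = Λ'(1) > 0 and edge-perspective distribution λ(x) = Λ'(x)/R. Let T > 0, δ ∈ [0,1], a = RT. If λ(f_p(q)) < q for every q ∈ (0,1], then T ≤ 1 / ( 2·Λ₂·(1 + 2δ² − 2δ) ). -/

import Mathlib

/-- The slot-node density-evolution update of IRSA-DPC:
`f_p(q) = 1 - (1-δ)e^{-aq} - δe^{-aδq} - δ(1-δ)aq e^{-aq}`. -/
noncomputable def fp (a δ q : ℝ) : ℝ :=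
  1 - (1 - δ) * Real.exp (-(a * q)) - δ * Real.exp (-(a * δ * q)) -
    δ * (1 - δ) * a * q * Real.exp (-(a * q))

/-!
Only the degree-2 term of `λ` matters: for small `q` with `f_p(q) ≥ 0` the density-evolution
condition gives `λ₂ f_p(q) < q`, and since `f_p(0) = 0` this bounds the slope,
`λ₂ f_p'(0) ≤ 1`, where `f_p'(0) = a (1 + 2δ² - 2δ)` and `λ₂ = 2Λ₂/R`, `a = RT`.
Where `f_p(q) < 0` the inequality `λ₂ f_p(q) ≤ q` holds anyway, so no sign analysis of `f_p`
is needed.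
-/

open Filter Topology

lemma mul_deriv_le_one_of_eventually_mul_le {g : ℝ → ℝ} {g' c : ℝ} (hg0 : g 0 = 0)
    (hg : HasDerivAt g g' 0) (hc : 0 ≤ c) (h : ∀ᶠ q in 𝓝[>] 0, 0 ≤ g q → c * g q ≤ q) :
    c * g' ≤ 1 := by
  have hslope : Tendsto (fun q => c * (g q / q)) (𝓝[>] 0) (𝓝 (c * g')) := by
    refine ((hasDerivAt_iff_tendsto_slope.mp hg).mono_left
      (nhdsWithin_mono _ fun q hq => ne_of_gt hq)).const_mul c |>.congr fun q => ?_
    simp [slope, hg0, div_eq_inv_mul]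
  refine le_of_tendsto hslope ?_
  filter_upwards [h, self_mem_nhdsWithin] with q hq (hq0 : 0 < q)
  rw [← mul_div_assoc, div_le_one hq0]
  rcases le_or_gt 0 (g q) with hgq | hgq
  · exact hq hgq
  · nlinarith

lemma fp_zero (a δ : ℝ) : fp a δ 0 = 0 := by
  simp [fp]

lemma hasDerivAt_fp_zero (a δ : ℝ) :
    HasDerivAt (fp a δ) (a * (1 + 2 * δ ^ 2 - 2 * δ)) 0 := by
  have hlin (b : ℝ) : HasDerivAt (fun q : ℝ => -(b * q)) (-b) 0 := by
    simpa using ((hasDerivAt_id (0 : ℝ)).const_mul b).fun_neg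
  have hE := (hlin a).exp
  have h := (((hasDerivAt_const (0 : ℝ) (1 : ℝ)).fun_sub (hE.const_mul (1 - δ))).fun_sub
    ((hlin (a * δ)).exp.const_mul δ)).fun_sub (((hasDerivAt_id' (0 : ℝ)).fun_mul hE).const_mul
      (δ * (1 - δ) * a))
  refine (h.congr_deriv (by simp; ring)).congr_of_eventuallyEq (.of_eq (funext fun q => ?_))
  simp only [fp]
  ring

lemma two_le_of_sum_Icc_eq_one {Λ : ℕ → ℝ} {D : ℕ} (hΛ1 : Λ 1 = 0)
    (hsum : ∑ l ∈ Finset.Icc 1 D, Λ l = 1) : 2 ≤ D := by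
  by_contra! hD
  interval_cases D <;> simp [hΛ1] at hsum

lemma mul_le_sum_edge_distribution {Λ : ℕ → ℝ} {D : ℕ} {R x : ℝ} (hΛ : ∀ l, 0 ≤ Λ l)
    (hR : 0 ≤ R) (hD : 2 ≤ D) (hx : 0 ≤ x) :
    2 * Λ 2 / R * x ≤ ∑ l ∈ Finset.Icc 1 D, ((l : ℝ) * Λ l / R) * x ^ (l - 1) := by
  have h := Finset.single_le_sum (f := fun l : ℕ => ((l : ℝ) * Λ l / R) * x ^ (l - 1))
    (fun l _ => by have := hΛ l; positivity) (Finset.mem_Icc.mpr ⟨one_le_two, hD⟩)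
  simpa using h

theorem irsa_dpc_upper_bound_3_general (D : ℕ) (Λ : ℕ → ℝ) (hΛ : ∀ l, 0 ≤ Λ l)
    (hΛ1 : Λ 1 = 0) (hΛ2 : 0 < Λ 2)
    (hΛsum : ∑ l ∈ Finset.Icc 1 D, Λ l = 1)
    (R T δ : ℝ) (hRpos : 0 < R)
    (hDE : ∀ q ∈ Set.Ioc (0 : ℝ) 1,
      (∑ l ∈ Finset.Icc 1 D, ((l : ℝ) * Λ l / R) * (fp (R * T) δ q) ^ (l - 1)) < q) :
    T ≤ 1 / (2 * Λ 2 * (1 + 2 * δ ^ 2 - 2 * δ)) := by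
  have hD := two_le_of_sum_Icc_eq_one hΛ1 hΛsum
  have hslope : 2 * Λ 2 / R * (R * T * (1 + 2 * δ ^ 2 - 2 * δ)) ≤ 1 :=
    mul_deriv_le_one_of_eventually_mul_le (fp_zero _ _) (hasDerivAt_fp_zero _ _)
      (by have := hΛ 2; positivity) (by
        filter_upwards [Ioc_mem_nhdsGT zero_lt_one] with q hq hfp
        exact (mul_le_sum_edge_distribution hΛ hRpos.le hD hfp).trans (hDE q hq).le)
  have hquad : 0 < 1 + 2 * δ ^ 2 - 2 * δ := by nlinarith [sq_nonneg (1 - 2 * δ)]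
  rw [le_div_iff₀ (by positivity)]
  calc T * (2 * Λ 2 * (1 + 2 * δ ^ 2 - 2 * δ))
      = 2 * Λ 2 / R * (R * T * (1 + 2 * δ ^ 2 - 2 * δ)) := by field_simp
    _ ≤ 1 := hslope

/-- **Upper Bound 3.** Let `Λ` be a repetition distribution with no degree-1 term,
`Λ₂ > 0`, rate `R = ∑_l l Λ_l > 0` and edge-perspective distribution
`λ(x) = ∑_l (l Λ_l / R) x^{l-1}`.  If the strict density-evolution condition
`λ(f_p(q)) < q` holds for every `q ∈ (0,1]` (with `a = RT`, `T > 0`, `δ ∈ [0,1]`), then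
`T ≤ 1 / (2 Λ₂ (1 + 2δ² - 2δ))`. -/
theorem irsa_dpc_upper_bound_3 (D : ℕ) (Λ : ℕ → ℝ) (hΛ : ∀ l, 0 ≤ Λ l)
    (hΛ1 : Λ 1 = 0) (hΛ2 : 0 < Λ 2)
    (hΛsum : ∑ l ∈ Finset.Icc 1 D, Λ l = 1)
    (R T δ : ℝ) (hR : R = ∑ l ∈ Finset.Icc 1 D, (l : ℝ) * Λ l) (hRpos : 0 < R)
    (hT : 0 < T) (hδ : δ ∈ Set.Icc (0 : ℝ) 1)
    (hDE : ∀ q ∈ Set.Ioc (0 : ℝ) 1,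
      (∑ l ∈ Finset.Icc 1 D, ((l : ℝ) * Λ l / R) * (fp (R * T) δ q) ^ (l - 1)) < q) :
    T ≤ 1 / (2 * Λ 2 * (1 + 2 * δ ^ 2 - 2 * δ)) :=
  irsa_dpc_upper_bound_3_general D Λ hΛ hΛ1 hΛ2 hΛsum R T δ hRpos hDE
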